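/- arXiv:2603.16599 — 3 statements merged into one kernel-verified Lean document; each statement's English description precedes it below -/
import Mathlib

section
/- Generalized fundamental lemma. Let n, m, p, ℓ, L, T be positive integers with ℓ < L and L ≤ T. Let A ∈ ℝ^{n×n}, B ∈ ℝ^{n×m}, C ∈ ℝ^{p×n}, D ∈ ℝ^{p×m} define a minimal discrete-time LTI system, i.e., the pair (A,B) is controllable and the pair (A,C) is observable, and suppose the observability matrix O_ℓ = col(C, CA, …, CA^{ℓ−1}) has rank n (ℓ is at least the lag of the system). Let w_d ∈ ℝ^{(m+p)T} be a length-T trajectory of the system. Then the restricted behavior B|_L ⊆ ℝ^{(m+p)L} equals the column space (image) of the Hankel matrix H_L(w_d) if and only if rank H_L(w_d) = mL + n. -/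
open Matrix

/-- A length-`L` trajectory of the discrete-time LTI system `(A,B,C,D)`:
a stacked vector `w : Fin L × (Fin m ⊕ Fin p) → ℝ`, where `w (t, Sum.inl i)` are
the input components `u(t)` and `w (t, Sum.inr j)` the output components `y(t)`,
for which there exists a compatible state sequence. -/
def IsTraj {n m p : ℕ} (A : Matrix (Fin n) (Fin n) ℝ) (B : Matrix (Fin n) (Fin m) ℝ)
    (C : Matrix (Fin p) (Fin n) ℝ) (D : Matrix (Fin p) (Fin m) ℝ) (L : ℕ)
    (w : Fin L × (Fin m ⊕ Fin p) → ℝ) : Prop :=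
  ∃ x : Fin L → Fin n → ℝ,
    (∀ t : Fin L, ∀ h : (t : ℕ) + 1 < L,
      x ⟨(t : ℕ) + 1, h⟩ = A.mulVec (x t) + B.mulVec (fun i => w (t, Sum.inl i))) ∧
    (∀ t : Fin L,
      (fun j => w (t, Sum.inr j)) = C.mulVec (x t) + D.mulVec (fun i => w (t, Sum.inl i)))

/-- The restricted behavior `B|_L`: the set of all length-`L` trajectories,
viewed as stacked vectors in `ℝ^{(m+p)L}`. -/
def Behavior {n m p : ℕ} (A : Matrix (Fin n) (Fin n) ℝ) (B : Matrix (Fin n) (Fin m) ℝ)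
    (C : Matrix (Fin p) (Fin n) ℝ) (D : Matrix (Fin p) (Fin m) ℝ) (L : ℕ) :
    Set (Fin L × (Fin m ⊕ Fin p) → ℝ) :=
  {w | IsTraj A B C D L w}

/-- The Hankel matrix of depth `L` associated with a length-`T` sequence `w`
with values in `ℝ^q`: the `(i,j)` block entry is `w (i + j)` (0-based). -/
def hankel {q : Type} (L T : ℕ) (hLT : L ≤ T) (w : Fin T × q → ℝ) :
    Matrix (Fin L × q) (Fin (T - L + 1)) ℝ :=
  fun ik j =>
    w (⟨(ik.1 : ℕ) + (j : ℕ), by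
        have h1 := ik.1.isLt
        have h2 := j.isLt
        omega⟩, ik.2)

/-- The depth-`L` observability matrix `O_L = col(C, CA, …, CA^{L−1})`. -/
def obsMat {n p : ℕ} (C : Matrix (Fin p) (Fin n) ℝ) (A : Matrix (Fin n) (Fin n) ℝ)
    (L : ℕ) : Matrix (Fin L × Fin p) (Fin n) ℝ :=
  fun tj i => (C * A ^ (tj.1 : ℕ)) tj.2 i

/-- The controllability matrix `[B, AB, …, A^{n−1}B]`. -/
def ctrbMat {n m : ℕ} (A : Matrix (Fin n) (Fin n) ℝ) (B : Matrix (Fin n) (Fin m) ℝ) :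
    Matrix (Fin n) (Fin n × Fin m) ℝ :=
  fun i kj => (A ^ (kj.1 : ℕ) * B) i kj.2

namespace GFL
variable {n m p : ℕ} (A : Matrix (Fin n) (Fin n) ℝ) (B : Matrix (Fin n) (Fin m) ℝ)
  (C : Matrix (Fin p) (Fin n) ℝ) (D : Matrix (Fin p) (Fin m) ℝ)

/-- State evolution. -/
def X (u : ℕ → Fin m → ℝ) (x0 : Fin n → ℝ) : ℕ → Fin n → ℝ
  | 0 => x0
  | t+1 => A.mulVec (X u x0 t) + B.mulVec (u t)

lemma X_add (u u' : ℕ → Fin m → ℝ) (x0 x0' : Fin n → ℝ) (t : ℕ) :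
    X A B (u + u') (x0 + x0') t = X A B u x0 t + X A B u' x0' t := by
  induction t with
  | zero => rfl
  | succ t ih => simp [X, ih, Matrix.mulVec_add]; abel

lemma X_smul (c : ℝ) (u : ℕ → Fin m → ℝ) (x0 : Fin n → ℝ) (t : ℕ) :
    X A B (c • u) (c • x0) t = c • X A B u x0 t := by
  induction t with
  | zero => rfl
  | succ t ih => simp [X, ih, Matrix.mulVec_smul]

lemma X_zero_u (x0 : Fin n → ℝ) (t : ℕ) :
    X A B 0 x0 t = (A ^ t).mulVec x0 := by
  induction t with
  | zero => simp [X]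
  | succ t ih => simp [X, ih, pow_succ', ← Matrix.mulVec_mulVec]

/-- Extend a finite input sequence by zero. -/
def ext (L : ℕ) (u : Fin L → Fin m → ℝ) : ℕ → Fin m → ℝ :=
  fun t => if h : t < L then u ⟨t, h⟩ else 0

lemma ext_add (L : ℕ) (u u' : Fin L → Fin m → ℝ) :
    ext L (u + u') = ext L u + ext L u' := by
  funext t; simp only [ext, Pi.add_apply]; split <;> simp

lemma ext_smul (L : ℕ) (c : ℝ) (u : Fin L → Fin m → ℝ) :
    ext L (c • u) = c • ext L u := by
  funext t; simp only [ext, Pi.smul_apply]; split <;> simp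

/-- The linear map sending (input, initial state) to the resulting trajectory. -/
def philin (L : ℕ) :
    ((Fin L → Fin m → ℝ) × (Fin n → ℝ)) →ₗ[ℝ] (Fin L × (Fin m ⊕ Fin p) → ℝ) where
  toFun ux := fun tk =>
    Sum.elim (fun i => ux.1 tk.1 i)
      (fun j => (C.mulVec (X A B (ext L ux.1) ux.2 tk.1) + D.mulVec (ux.1 tk.1)) j) tk.2
  map_add' ux ux' := by
    funext tk
    obtain ⟨t, k⟩ := tk
    cases k with
    | inl i => rfl
    | inr j =>
      simp only [Sum.elim_inr, Pi.add_apply]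
      have : ext L (ux.1 + ux'.1) = ext L ux.1 + ext L ux'.1 := ext_add L _ _
      simp only [Prod.fst_add, Prod.snd_add, this, X_add, Matrix.mulVec_add, Pi.add_apply]
      ring
  map_smul' c ux := by
    funext tk
    obtain ⟨t, k⟩ := tk
    cases k with
    | inl i => rfl
    | inr j =>
      simp only [Sum.elim_inr, Pi.smul_apply, RingHom.id_apply]
      have : ext L (c • ux.1) = c • ext L ux.1 := ext_smul L c _
      simp only [Prod.smul_fst, Prod.smul_snd, this, X_smul, Matrix.mulVec_smul,
        Pi.smul_apply, Pi.add_apply, smul_eq_mul]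
      ring

lemma behavior_eq_range (L : ℕ) (hL : 0 < L) :
    Behavior A B C D L = Set.range (philin A B C D L) := by
  ext w
  constructor
  · rintro ⟨x, h1, h2⟩
    refine ⟨⟨fun t i => w (t, Sum.inl i), x ⟨0, hL⟩⟩, ?_⟩
    have key : ∀ k (hk : k < L),
        X A B (ext L (fun t i => w (t, Sum.inl i))) (x ⟨0, hL⟩) k = x ⟨k, hk⟩ := by
      intro k
      induction k with
      | zero => intro hk; rfl
      | succ k ih =>
        intro hk
        have hkL : k < L := Nat.lt_of_succ_lt hk
        show A.mulVec _ + B.mulVec _ = _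
        rw [ih hkL]
        have he : ext L (fun t i => w (t, Sum.inl i)) k = fun i => w (⟨k, hkL⟩, Sum.inl i) := by
          simp [ext, hkL]
        rw [he]
        exact (h1 ⟨k, hkL⟩ hk).symm
    funext tk
    obtain ⟨t, k⟩ := tk
    cases k with
    | inl i => rfl
    | inr j =>
      show (C.mulVec _ + D.mulVec _) j = w (t, Sum.inr j)
      rw [key t.1 t.2]
      exact (congrFun (h2 t) j).symm
  · rintro ⟨⟨u, x0⟩, rfl⟩
    refine ⟨fun t => X A B (ext L u) x0 t.1, ?_, ?_⟩
    · intro t h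
      show A.mulVec _ + B.mulVec (ext L u t.1) = _
      have he : ext L u t.1 = u t := by simp [ext, t.2]
      rw [he]
      rfl
    · intro t
      rfl

lemma mulVec_injective_of_rank_eq {ι : Type} [Fintype ι] (M : Matrix ι (Fin n) ℝ)
    (h : M.rank = n) : Function.Injective M.mulVec := by
  have h2 := LinearMap.finrank_range_add_finrank_ker M.mulVecLin
  rw [Module.finrank_pi] at h2
  unfold Matrix.rank at h
  have hker : Module.finrank ℝ (LinearMap.ker M.mulVecLin) = 0 := by
    simp only [Fintype.card_fin] at h2
    omega
  have : LinearMap.ker M.mulVecLin = ⊥ := Submodule.finrank_eq_zero.mp hker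
  exact LinearMap.ker_eq_bot.mp this

lemma philin_injective {ℓ L : ℕ} (hℓL : ℓ < L)
    (hlag : (obsMat C A ℓ).rank = n) :
    Function.Injective (philin A B C D L (n := n) (m := m) (p := p)) := by
  rw [← LinearMap.ker_eq_bot, LinearMap.ker_eq_bot']
  rintro ⟨u, x0⟩ h
  have hu : u = 0 := by
    funext t i
    exact congrFun h (t, Sum.inl i)
  subst hu
  have hext : ext L (0 : Fin L → Fin m → ℝ) = 0 := by
    funext t; simp only [ext]; split <;> rfl
  have hx0 : (obsMat C A ℓ).mulVec x0 = 0 := by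
    funext tj
    obtain ⟨t, j⟩ := tj
    have ht : (t : ℕ) < L := lt_trans t.isLt hℓL
    have := congrFun h (⟨t.1, ht⟩, Sum.inr j)
    simp only [philin, LinearMap.coe_mk, AddHom.coe_mk, Sum.elim_inr, hext,
      X_zero_u] at this
    simp only [Pi.zero_apply, Matrix.mulVec_zero, Pi.add_apply, add_zero] at this
    have : ((C * A ^ (t : ℕ)).mulVec x0) j = 0 := by
      rw [← Matrix.mulVec_mulVec]; exact this
    simpa [obsMat, Matrix.mulVec, dotProduct] using this
  have := mulVec_injective_of_rank_eq (obsMat C A ℓ) hlag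
  have hx : x0 = 0 := by
    apply this
    rw [hx0, Matrix.mulVec_zero]
  simp [hx]

lemma finrank_range_philin {ℓ : ℕ} (L : ℕ) (hℓL : ℓ < L)
    (hlag : (obsMat C A ℓ).rank = n) :
    Module.finrank ℝ (LinearMap.range (philin A B C D L (n := n) (m := m) (p := p)))
      = m * L + n := by
  rw [LinearMap.finrank_range_of_inj (philin_injective A B C D hℓL hlag)]
  simp [Module.finrank_prod, Module.finrank_pi, Module.finrank_pi_fintype,
    Finset.sum_const, mul_comm]

lemma window_isTraj {T L : ℕ} (hLT : L ≤ T) (wd : Fin T × (Fin m ⊕ Fin p) → ℝ)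
    (hwd : IsTraj A B C D T wd) (s : ℕ) (hs : s + L ≤ T) :
    IsTraj A B C D L (fun tk : Fin L × (Fin m ⊕ Fin p) =>
      wd (⟨tk.1.1 + s, by have := tk.1.isLt; omega⟩, tk.2)) := by
  obtain ⟨xd, hd1, hd2⟩ := hwd
  refine ⟨fun t => xd ⟨t.1 + s, by have := t.isLt; omega⟩, ?_, ?_⟩
  · intro t h
    have hlt : (t : ℕ) + s + 1 < T := by have := t.isLt; omega
    have key := hd1 ⟨t.1 + s, by have := t.isLt; omega⟩ hlt
    have e : (⟨(t : ℕ) + 1 + s, by have := t.isLt; omega⟩ : Fin T)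
        = ⟨(t : ℕ) + s + 1, hlt⟩ := by
      apply Fin.ext; simp; omega
    show xd ⟨(t : ℕ) + 1 + s, _⟩ = _
    rw [e]
    exact key
  · intro t
    exact hd2 ⟨t.1 + s, by have := t.isLt; omega⟩

lemma hankel_mulVec_mem {T L : ℕ} (hLT : L ≤ T) (hL : 0 < L)
    (wd : Fin T × (Fin m ⊕ Fin p) → ℝ) (hwd : IsTraj A B C D T wd)
    (g : Fin (T - L + 1) → ℝ) :
    (hankel L T hLT wd).mulVec g
      ∈ LinearMap.range (philin A B C D L (n := n) (m := m) (p := p)) := by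
  have key : (hankel L T hLT wd).mulVec g
      = ∑ j : Fin (T - L + 1), g j • (fun tk : Fin L × (Fin m ⊕ Fin p) =>
          wd (⟨tk.1.1 + (j : ℕ), by have := tk.1.isLt; have := j.isLt; omega⟩, tk.2)) := by
    funext tk
    simp only [Matrix.mulVec, dotProduct, hankel, Finset.sum_apply, Pi.smul_apply,
      smul_eq_mul]
    exact Finset.sum_congr rfl fun j _ => mul_comm _ _
  rw [key]
  apply Submodule.sum_mem
  intro j _
  apply Submodule.smul_mem
  have hmem := window_isTraj A B C D hLT wd hwd (j : ℕ) (by have := j.isLt; omega)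
  have : (fun tk : Fin L × (Fin m ⊕ Fin p) =>
      wd (⟨tk.1.1 + (j : ℕ), by have := tk.1.isLt; have := j.isLt; omega⟩, tk.2))
      ∈ Behavior A B C D L := hmem
  rw [behavior_eq_range A B C D L hL] at this
  exact this

end GFL

/-- **Generalized fundamental lemma.** For a minimal LTI system `(A,B,C,D)`
(controllable and observable) whose depth-`ℓ` observability matrix has rank `n`
(so `ℓ` is at least the lag), and a length-`T` trajectory `w_d`, with `ℓ < L ≤ T`:
the restricted behavior `B|_L` equals the column space of the Hankel matrix
`H_L(w_d)` if and only if `rank H_L(w_d) = mL + n`. -/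
theorem generalized_fundamental_lemma
    {n m p ℓ L T : ℕ}
    (hn : 0 < n) (hm : 0 < m) (hp : 0 < p) (hℓ : 0 < ℓ) (hL : 0 < L) (hT : 0 < T)
    (hℓL : ℓ < L) (hLT : L ≤ T)
    (A : Matrix (Fin n) (Fin n) ℝ) (B : Matrix (Fin n) (Fin m) ℝ)
    (C : Matrix (Fin p) (Fin n) ℝ) (D : Matrix (Fin p) (Fin m) ℝ)
    (hctrb : (ctrbMat A B).rank = n)
    (hobs : (obsMat C A n).rank = n)
    (hlag : (obsMat C A ℓ).rank = n)
    (wd : Fin T × (Fin m ⊕ Fin p) → ℝ)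
    (hwd : IsTraj A B C D T wd) :
    Behavior A B C D L
        = {v | ∃ g : Fin (T - L + 1) → ℝ, v = (hankel L T hLT wd).mulVec g}
      ↔ (hankel L T hLT wd).rank = m * L + n := by
  set H := hankel L T hLT wd with hH
  set S : Submodule ℝ (Fin L × (Fin m ⊕ Fin p) → ℝ) :=
    LinearMap.range (GFL.philin A B C D L) with hS
  have hBeh : Behavior A B C D L = (S : Set _) := by
    rw [GFL.behavior_eq_range A B C D L hL]
    rfl
  have hdim : Module.finrank ℝ S = m * L + n :=
    GFL.finrank_range_philin A B C D L hℓL hlag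
  have hsetH : {v | ∃ g : Fin (T - L + 1) → ℝ, v = H.mulVec g}
      = (LinearMap.range H.mulVecLin : Set _) := by
    ext v
    simp only [Set.mem_setOf_eq, SetLike.mem_coe, LinearMap.mem_range,
      Matrix.mulVecLin_apply]
    exact ⟨fun ⟨g, hg⟩ => ⟨g, hg.symm⟩, fun ⟨g, hg⟩ => ⟨g, hg.symm⟩⟩
  have hle : LinearMap.range H.mulVecLin ≤ S := by
    rintro v ⟨g, rfl⟩
    exact GFL.hankel_mulVec_mem A B C D hLT hL wd hwd g
  constructor
  · intro hEq
    have hSeq : S = LinearMap.range H.mulVecLin := by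
      apply SetLike.coe_injective
      rw [← hBeh, hEq, hsetH]
    show Module.finrank ℝ (LinearMap.range H.mulVecLin) = m * L + n
    rw [← hSeq]
    exact hdim
  · intro hrank
    have hr : Module.finrank ℝ (LinearMap.range H.mulVecLin) = m * L + n := hrank
    have hSeq : LinearMap.range H.mulVecLin = S :=
      Submodule.eq_of_le_of_finrank_le hle (by rw [hdim, hr])
    rw [hBeh, hsetH, hSeq]
end

section
/- Dimension of the finite-horizon behavior. Let n, m, p, L be positive integers and let A ∈ ℝ^{n×n}, B ∈ ℝ^{n×m}, C ∈ ℝ^{p×n}, D ∈ ℝ^{p×m} define a discrete-time LTI system. Then the restricted behavior B|_L is a linear subspace of ℝ^{(m+p)L}, and its dimension equals mL + rank O_L, where O_L = col(C, CA, …, CA^{L−1}) is the depth-L observability matrix. In particular, if rank O_L = n (i.e., L is at least the lag of the system), then dim B|_L = mL + n. -/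
open Matrix

namespace BehaviorDimAux

variable {n m p L : ℕ}

/-- State sequence generated from initial state `x₀` and input sequence `u`. -/
def X (A : Matrix (Fin n) (Fin n) ℝ) (B : Matrix (Fin n) (Fin m) ℝ)
    (x₀ : Fin n → ℝ) (u : ℕ → Fin m → ℝ) : ℕ → Fin n → ℝ
  | 0 => x₀
  | k + 1 => A.mulVec (X A B x₀ u k) + B.mulVec (u k)

lemma X_add (A : Matrix (Fin n) (Fin n) ℝ) (B : Matrix (Fin n) (Fin m) ℝ)
    (x₀ x₀' : Fin n → ℝ) (u u' : ℕ → Fin m → ℝ) (k : ℕ) :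
    X A B (x₀ + x₀') (u + u') k = X A B x₀ u k + X A B x₀' u' k := by
  induction k with
  | zero => rfl
  | succ k ih =>
    simp only [X, ih, Matrix.mulVec_add, Pi.add_apply]
    abel

lemma X_smul (A : Matrix (Fin n) (Fin n) ℝ) (B : Matrix (Fin n) (Fin m) ℝ)
    (c : ℝ) (x₀ : Fin n → ℝ) (u : ℕ → Fin m → ℝ) (k : ℕ) :
    X A B (c • x₀) (c • u) k = c • X A B x₀ u k := by
  induction k with
  | zero => rfl
  | succ k ih =>
    simp only [X, ih, Matrix.mulVec_smul, Pi.smul_apply, smul_add]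

lemma X_zero (A : Matrix (Fin n) (Fin n) ℝ) (B : Matrix (Fin n) (Fin m) ℝ)
    (x₀ : Fin n → ℝ) (k : ℕ) :
    X A B x₀ 0 k = (A ^ k).mulVec x₀ := by
  induction k with
  | zero => simp [X]
  | succ k ih =>
    simp only [X, ih, Pi.zero_apply, Matrix.mulVec_zero, add_zero,
      Matrix.mulVec_mulVec]
    rw [← pow_succ']

/-- Extend a finite input to all of `ℕ` by zero. -/
def pad (u : Fin L × Fin m → ℝ) : ℕ → Fin m → ℝ :=
  fun k i => if h : k < L then u (⟨k, h⟩, i) else 0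

lemma pad_add (u u' : Fin L × Fin m → ℝ) : pad (u + u') = pad u + pad u' := by
  funext k i
  simp only [pad, Pi.add_apply]
  split <;> simp

lemma pad_smul (c : ℝ) (u : Fin L × Fin m → ℝ) : pad (c • u) = c • pad u := by
  funext k i
  simp only [pad, Pi.smul_apply, smul_eq_mul]
  split <;> simp

lemma pad_zero : pad (0 : Fin L × Fin m → ℝ) = 0 := by
  funext k i
  simp only [pad, Pi.zero_apply]
  split <;> rfl

lemma pad_fin (u : Fin L × Fin m → ℝ) (t : Fin L) :
    pad u (t : ℕ) = fun i => u (t, i) := by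
  funext i
  simp [pad, t.isLt]

/-- The map sending `(u, x₀)` to the corresponding trajectory. -/
def Phi (A : Matrix (Fin n) (Fin n) ℝ) (B : Matrix (Fin n) (Fin m) ℝ)
    (C : Matrix (Fin p) (Fin n) ℝ) (D : Matrix (Fin p) (Fin m) ℝ) :
    ((Fin L × Fin m → ℝ) × (Fin n → ℝ)) →ₗ[ℝ] (Fin L × (Fin m ⊕ Fin p) → ℝ) where
  toFun ux := fun ts =>
    Sum.elim (fun i => ux.1 (ts.1, i))
      (fun j => (C.mulVec (X A B ux.2 (pad ux.1) (ts.1 : ℕ)) +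
        D.mulVec (fun i => ux.1 (ts.1, i))) j) ts.2
  map_add' ux ux' := by
    obtain ⟨u, x₀⟩ := ux
    obtain ⟨u', x₀'⟩ := ux'
    funext ts
    obtain ⟨t, s⟩ := ts
    cases s with
    | inl i => simp
    | inr j =>
      simp only [Sum.elim_inr, Pi.add_apply, Prod.fst_add, Prod.snd_add,
        pad_add, X_add, Matrix.mulVec_add]
      have : (fun i => u (t, i) + u' (t, i)) =
          (fun i => u (t, i)) + fun i => u' (t, i) := rfl
      rw [this, Matrix.mulVec_add]
      simp only [Pi.add_apply]
      ring
  map_smul' c ux := by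
    obtain ⟨u, x₀⟩ := ux
    funext ts
    obtain ⟨t, s⟩ := ts
    cases s with
    | inl i => simp
    | inr j =>
      simp only [Sum.elim_inr, Prod.smul_fst, Prod.smul_snd, pad_smul, X_smul,
        Matrix.mulVec_smul, RingHom.id_apply, Pi.smul_apply, smul_eq_mul]
      have : (fun i => c * u (t, i)) = c • fun i => u (t, i) := rfl
      rw [this, Matrix.mulVec_smul]
      simp only [Pi.add_apply, Pi.smul_apply, smul_eq_mul]
      ring

lemma range_Phi (A : Matrix (Fin n) (Fin n) ℝ) (B : Matrix (Fin n) (Fin m) ℝ)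
    (C : Matrix (Fin p) (Fin n) ℝ) (D : Matrix (Fin p) (Fin m) ℝ) (hL : 0 < L) :
    (LinearMap.range (BehaviorDimAux.Phi (L := L) A B C D) : Set (Fin L × (Fin m ⊕ Fin p) → ℝ)) =
      Behavior A B C D L := by
  ext w
  simp only [SetLike.mem_coe, LinearMap.mem_range, Behavior, Set.mem_setOf_eq, IsTraj]
  constructor
  · rintro ⟨⟨u, x₀⟩, rfl⟩
    refine ⟨fun t => X A B x₀ (pad u) (t : ℕ), ?_, ?_⟩
    · intro t h
      show X A B x₀ (pad u) ((t : ℕ) + 1) = _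
      simp only [X, pad_fin]
      rfl
    · intro t
      funext j
      simp [Phi, pad_fin]
  · rintro ⟨x, hrec, hout⟩
    refine ⟨⟨fun ti => w (ti.1, Sum.inl ti.2), x ⟨0, hL⟩⟩, ?_⟩
    have key : ∀ k (hk : k < L),
        X A B (x ⟨0, hL⟩) (pad fun ti => w (ti.1, Sum.inl ti.2)) k = x ⟨k, hk⟩ := by
      intro k
      induction k with
      | zero => intro hk; rfl
      | succ k ih =>
        intro hk
        have hk' : k < L := Nat.lt_of_succ_lt hk
        show A.mulVec _ + B.mulVec _ = _
        rw [ih hk']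
        have := hrec ⟨k, hk'⟩ hk
        rw [this]
        congr 1
        have := pad_fin (fun ti => w (ti.1, Sum.inl ti.2)) ⟨k, hk'⟩
        simp only [this]
    funext ts
    obtain ⟨t, s⟩ := ts
    cases s with
    | inl i => rfl
    | inr j =>
      show (C.mulVec (X A B (x ⟨0, hL⟩) (pad fun ti => w (ti.1, Sum.inl ti.2)) (t : ℕ)) +
        D.mulVec (fun i => w (t, Sum.inl i))) j = w (t, Sum.inr j)
      have hx : X A B (x ⟨0, hL⟩) (pad fun ti => w (ti.1, Sum.inl ti.2)) (t : ℕ)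
          = x t := by
        have := key (t : ℕ) t.isLt
        simpa using this
      rw [hx]
      have := hout t
      exact (congrFun this j).symm

lemma ker_Phi (A : Matrix (Fin n) (Fin n) ℝ) (B : Matrix (Fin n) (Fin m) ℝ)
    (C : Matrix (Fin p) (Fin n) ℝ) (D : Matrix (Fin p) (Fin m) ℝ) :
    LinearMap.ker (BehaviorDimAux.Phi (L := L) A B C D) =
      (LinearMap.ker (obsMat C A L).mulVecLin).map
        (LinearMap.inr ℝ (Fin L × Fin m → ℝ) (Fin n → ℝ)) := by
  ext ⟨u, x₀⟩
  simp only [LinearMap.mem_ker, Submodule.mem_map, LinearMap.coe_inr, Prod.mk.injEq]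
  constructor
  · intro h
    have hu : u = 0 := by
      funext ti
      obtain ⟨t, i⟩ := ti
      exact congrFun h (t, Sum.inl i)
    subst hu
    refine ⟨x₀, ?_, rfl, rfl⟩
    funext tj
    obtain ⟨t, j⟩ := tj
    have h2 := congrFun h (t, Sum.inr j)
    simp only [Phi, pad_zero, X_zero, LinearMap.coe_mk, AddHom.coe_mk,
      Sum.elim_inr] at h2
    have hz : (fun i => (0 : Fin L × Fin m → ℝ) (t, i)) = (0 : Fin m → ℝ) := rfl
    rw [hz, Matrix.mulVec_zero, add_zero, Matrix.mulVec_mulVec] at h2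
    simp only [Matrix.mulVecLin_apply, Pi.zero_apply]
    rw [show ((obsMat C A L).mulVec x₀) (t, j) = ((C * A ^ (t : ℕ)).mulVec x₀) j from rfl]
    exact h2
  · rintro ⟨y, hy, hu, hx⟩
    subst hx
    rw [← hu]
    funext ts
    obtain ⟨t, s⟩ := ts
    cases s with
    | inl i => rfl
    | inr j =>
      show (C.mulVec (X A B y (pad (0 : Fin L × Fin m → ℝ)) (t : ℕ)) +
        D.mulVec (fun i => (0 : Fin L × Fin m → ℝ) (t, i))) j = 0
      have hz : (fun i => (0 : Fin L × Fin m → ℝ) (t, i)) = (0 : Fin m → ℝ) := rfl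
      rw [pad_zero, X_zero, hz, Matrix.mulVec_zero, add_zero, Matrix.mulVec_mulVec]
      have := congrFun hy (t, j)
      simp only [Matrix.mulVecLin_apply, Pi.zero_apply] at this
      rw [show ((obsMat C A L).mulVec y) (t, j) = ((C * A ^ (t : ℕ)).mulVec y) j from rfl] at this
      exact this

end BehaviorDimAux

/-- **Dimension of the finite-horizon behavior.** The restricted behavior `B|_L`
of the LTI system `(A,B,C,D)` is a linear subspace of `ℝ^{(m+p)L}` and its
dimension is `mL + rank O_L`; in particular if `rank O_L = n` then
`dim B|_L = mL + n`. -/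
theorem behavior_dimension
    {n m p L : ℕ}
    (hn : 0 < n) (hm : 0 < m) (hp : 0 < p) (hL : 0 < L)
    (A : Matrix (Fin n) (Fin n) ℝ) (B : Matrix (Fin n) (Fin m) ℝ)
    (C : Matrix (Fin p) (Fin n) ℝ) (D : Matrix (Fin p) (Fin m) ℝ) :
    ∃ S : Submodule ℝ (Fin L × (Fin m ⊕ Fin p) → ℝ),
      (S : Set (Fin L × (Fin m ⊕ Fin p) → ℝ)) = Behavior A B C D L ∧
      Module.finrank ℝ ↥S = m * L + (obsMat C A L).rank ∧
      ((obsMat C A L).rank = n → Module.finrank ℝ ↥S = m * L + n) := by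
  classical
  refine ⟨LinearMap.range (BehaviorDimAux.Phi A B C D),
    BehaviorDimAux.range_Phi A B C D hL, ?_⟩
  have hrank : (obsMat C A L).rank =
      Module.finrank ℝ (LinearMap.range (obsMat C A L).mulVecLin) := rfl
  have hrn : Module.finrank ℝ (LinearMap.range (obsMat C A L).mulVecLin) +
      Module.finrank ℝ (LinearMap.ker (obsMat C A L).mulVecLin) = n := by
    have := LinearMap.finrank_range_add_finrank_ker (obsMat C A L).mulVecLin
    rwa [Module.finrank_fintype_fun_eq_card, Fintype.card_fin] at this
  have hrn2 : Module.finrank ℝ (LinearMap.range (BehaviorDimAux.Phi (L := L) A B C D)) +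
      Module.finrank ℝ (LinearMap.ker (BehaviorDimAux.Phi (L := L) A B C D)) = m * L + n := by
    have := LinearMap.finrank_range_add_finrank_ker (BehaviorDimAux.Phi (L := L) A B C D)
    rwa [Module.finrank_prod, Module.finrank_fintype_fun_eq_card,
      Module.finrank_fintype_fun_eq_card, Fintype.card_prod, Fintype.card_fin,
      Fintype.card_fin, Fintype.card_fin, Nat.mul_comm] at this
  have hker : Module.finrank ℝ (LinearMap.ker (BehaviorDimAux.Phi (L := L) A B C D)) =
      Module.finrank ℝ (LinearMap.ker (obsMat C A L).mulVecLin) := by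
    rw [BehaviorDimAux.ker_Phi]
    exact (LinearEquiv.finrank_eq ((LinearMap.ker (obsMat C A L).mulVecLin).equivMapOfInjective
      _ LinearMap.inr_injective)).symm
  rw [hker] at hrn2
  constructor
  · rw [hrank]; omega
  · intro h
    rw [hrank] at h; omega
end

section
/- Rank bound for Hankel matrices of system trajectories. Let n, m, p, L, T be positive integers with L ≤ T, and let A ∈ ℝ^{n×n}, B ∈ ℝ^{n×m}, C ∈ ℝ^{p×n}, D ∈ ℝ^{p×m} define a discrete-time LTI system. If w_d ∈ ℝ^{(m+p)T} is a length-T trajectory of the system, then rank H_L(w_d) ≤ mL + rank O_L ≤ mL + n, where O_L = col(C, CA, …, CA^{L−1}) is the depth-L observability matrix. Consequently, the generalized persistency of excitation condition rank H_L(w_d) = mL + n is the maximal possible rank of the Hankel matrix H_L(w_d). -/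
/-!
Every column of `H_L(w_d)` is a window of `w_d`, hence a length-`L` trajectory, so the rank of
`H_L(w_d)` is at most the dimension of the space of length-`L` trajectories. By rank–nullity for
the projection onto the inputs, that dimension is at most `mL` plus the dimension of the
zero-input trajectories; such a trajectory is determined by its output, which is
`y = O_L x(1)`, so the latter dimension is at most `rank O_L ≤ n`.
-/

open Matrix

lemma eq_pow_mulVec_of_succ {R ι : Type*} [CommSemiring R] [Fintype ι] [DecidableEq ι]
    {A : Matrix ι ι R} {L : ℕ} {x : Fin L → ι → R}
    (hx : ∀ t : Fin L, ∀ h : (t : ℕ) + 1 < L, x ⟨(t : ℕ) + 1, h⟩ = A *ᵥ x t) (t : Fin L) :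
    x t = (A ^ (t : ℕ)) *ᵥ x ⟨0, t.pos⟩ := by
  obtain ⟨k, hk⟩ := t
  induction k with
  | zero => simp
  | succ k ih => rw [hx ⟨k, by omega⟩ hk, ih, mulVec_mulVec, ← pow_succ']

namespace IsTraj

variable {n m p : ℕ} {A : Matrix (Fin n) (Fin n) ℝ} {B : Matrix (Fin n) (Fin m) ℝ}
  {C : Matrix (Fin p) (Fin n) ℝ} {D : Matrix (Fin p) (Fin m) ℝ}

lemma zero (L : ℕ) : IsTraj A B C D L 0 :=
  ⟨0, fun _ _ => by simp [← Pi.zero_def], fun _ => by simp [← Pi.zero_def]⟩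

lemma add {L : ℕ} {v w : Fin L × (Fin m ⊕ Fin p) → ℝ}
    (hv : IsTraj A B C D L v) (hw : IsTraj A B C D L w) : IsTraj A B C D L (v + w) := by
  obtain ⟨x, hx, hy⟩ := hv
  obtain ⟨x', hx', hy'⟩ := hw
  have hin : ∀ t, (fun i => (v + w) (t, Sum.inl i)) =
      (fun i => v (t, Sum.inl i)) + fun i => w (t, Sum.inl i) := fun _ => rfl
  have hout : ∀ t, (fun j => (v + w) (t, Sum.inr j)) =
      (fun j => v (t, Sum.inr j)) + fun j => w (t, Sum.inr j) := fun _ => rfl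
  refine ⟨x + x', fun t h => ?_, fun t => ?_⟩
  · rw [Pi.add_apply, Pi.add_apply, hx t h, hx' t h, hin, mulVec_add, mulVec_add]
    abel
  · rw [hout, hy t, hy' t, hin, Pi.add_apply, mulVec_add, mulVec_add]
    abel

lemma smul {L : ℕ} (c : ℝ) {w : Fin L × (Fin m ⊕ Fin p) → ℝ}
    (hw : IsTraj A B C D L w) : IsTraj A B C D L (c • w) := by
  obtain ⟨x, hx, hy⟩ := hw
  have hin : ∀ t, (fun i => (c • w) (t, Sum.inl i)) = c • fun i => w (t, Sum.inl i) :=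
    fun _ => rfl
  have hout : ∀ t, (fun j => (c • w) (t, Sum.inr j)) = c • fun j => w (t, Sum.inr j) :=
    fun _ => rfl
  refine ⟨c • x, fun t h => ?_, fun t => ?_⟩
  · rw [Pi.smul_apply, Pi.smul_apply, hx t h, hin, mulVec_smul, mulVec_smul, smul_add]
  · rw [hout, hy t, hin, Pi.smul_apply, mulVec_smul, mulVec_smul, smul_add]

lemma hankel_col {L T : ℕ} (hLT : L ≤ T) {w : Fin T × (Fin m ⊕ Fin p) → ℝ}
    (hw : IsTraj A B C D T w) (j : Fin (T - L + 1)) :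
    IsTraj A B C D L fun ik => hankel L T hLT w ik j := by
  obtain ⟨x, hx, hy⟩ := hw
  have hj := j.isLt
  refine ⟨fun t => x ⟨(t : ℕ) + j, by omega⟩, fun t h => ?_,
    fun t => hy ⟨(t : ℕ) + j, by omega⟩⟩
  have := hx ⟨(t : ℕ) + j, by omega⟩ (show (t : ℕ) + j + 1 < T by omega)
  simp only [Nat.add_right_comm _ 1] at this ⊢
  exact this

lemma output_mem_range_obsMat {L : ℕ} {w : Fin L × (Fin m ⊕ Fin p) → ℝ}
    (hw : IsTraj A B C D L w) (hu : ∀ t i, w (t, Sum.inl i) = 0) :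
    (fun tj : Fin L × Fin p => w (tj.1, Sum.inr tj.2)) ∈
      LinearMap.range (obsMat C A L).mulVecLin := by
  obtain ⟨x, hx, hy⟩ := hw
  have hu' : ∀ t, (fun i => w (t, Sum.inl i)) = 0 := fun t => funext (hu t)
  rcases Nat.eq_zero_or_pos L with rfl | hL
  · exact ⟨0, funext fun tj => tj.1.elim0⟩
  have hfree : ∀ t, x t = (A ^ (t : ℕ)) *ᵥ x ⟨0, hL⟩ :=
    eq_pow_mulVec_of_succ fun t h => by simpa [hu'] using hx t h
  refine ⟨x ⟨0, hL⟩, funext fun ⟨t, j⟩ => ?_⟩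
  have := congrFun (hy t) j
  rw [hu', mulVec_zero, add_zero, hfree, mulVec_mulVec] at this
  exact this.symm

end IsTraj

section Behavior

variable {n m p : ℕ} (A : Matrix (Fin n) (Fin n) ℝ) (B : Matrix (Fin n) (Fin m) ℝ)
  (C : Matrix (Fin p) (Fin n) ℝ) (D : Matrix (Fin p) (Fin m) ℝ) (L : ℕ)

def behaviorSubmodule : Submodule ℝ (Fin L × (Fin m ⊕ Fin p) → ℝ) where
  carrier := Behavior A B C D L
  zero_mem' := IsTraj.zero L
  add_mem' := IsTraj.add
  smul_mem' := IsTraj.smul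

theorem finrank_behaviorSubmodule_le :
    Module.finrank ℝ (behaviorSubmodule A B C D L) ≤ m * L + (obsMat C A L).rank := by
  set S := behaviorSubmodule A B C D L
  let input : (Fin L × (Fin m ⊕ Fin p) → ℝ) →ₗ[ℝ] Fin L × Fin m → ℝ :=
    LinearMap.funLeft ℝ ℝ (Prod.map id Sum.inl)
  let output : (Fin L × (Fin m ⊕ Fin p) → ℝ) →ₗ[ℝ] Fin L × Fin p → ℝ :=
    LinearMap.funLeft ℝ ℝ (Prod.map id Sum.inr)
  let f := input ∘ₗ S.subtype
  let g := output ∘ₗ S.subtype ∘ₗ (LinearMap.ker f).subtype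
  have hg_inj : Function.Injective g := by
    rintro ⟨⟨v, hv⟩, hv0⟩ ⟨⟨w, hw⟩, hw0⟩ hvw
    have hin := (LinearMap.mem_ker.1 hv0).trans (LinearMap.mem_ker.1 hw0).symm
    ext ⟨t, i | j⟩
    · exact congrFun hin (t, i)
    · exact congrFun hvw (t, j)
  have hg_range : LinearMap.range g ≤ LinearMap.range (obsMat C A L).mulVecLin := by
    rintro _ ⟨⟨⟨w, hw⟩, hw0⟩, rfl⟩
    exact hw.output_mem_range_obsMat fun t i => congrFun (LinearMap.mem_ker.1 hw0) (t, i)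
  calc Module.finrank ℝ S = Module.finrank ℝ (LinearMap.range f) +
        Module.finrank ℝ (LinearMap.ker f) := (f.finrank_range_add_finrank_ker).symm
    _ ≤ m * L + (obsMat C A L).rank := by
      gcongr
      · exact (Submodule.finrank_le _).trans_eq (by simp [mul_comm])
      · rw [← LinearMap.finrank_range_of_inj hg_inj]
        exact Submodule.finrank_mono hg_range

end Behavior

theorem hankel_rank_bound_general
    {n m p L T : ℕ}
    (hLT : L ≤ T)
    (A : Matrix (Fin n) (Fin n) ℝ) (B : Matrix (Fin n) (Fin m) ℝ)
    (C : Matrix (Fin p) (Fin n) ℝ) (D : Matrix (Fin p) (Fin m) ℝ)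
    (wd : Fin T × (Fin m ⊕ Fin p) → ℝ)
    (hwd : IsTraj A B C D T wd) :
    (hankel L T hLT wd).rank ≤ m * L + (obsMat C A L).rank ∧
    m * L + (obsMat C A L).rank ≤ m * L + n := by
  have hcols : Submodule.span ℝ (Set.range (hankel L T hLT wd)ᵀ) ≤
      behaviorSubmodule A B C D L :=
    Submodule.span_le.2 <| Set.range_subset_iff.2 (hwd.hankel_col hLT)
  refine ⟨?_, Nat.add_le_add_left (by simpa using (obsMat C A L).rank_le_card_width) _⟩
  calc (hankel L T hLT wd).rank
      = Module.finrank ℝ (Submodule.span ℝ (Set.range (hankel L T hLT wd)ᵀ)) :=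
        (hankel L T hLT wd).rank_eq_finrank_span_cols
    _ ≤ Module.finrank ℝ (behaviorSubmodule A B C D L) := Submodule.finrank_mono hcols
    _ ≤ m * L + (obsMat C A L).rank := finrank_behaviorSubmodule_le A B C D L

/-- **Rank bound for Hankel matrices of system trajectories.** For any length-`T`
trajectory `w_d` of the LTI system `(A,B,C,D)` and `L ≤ T`,
`rank H_L(w_d) ≤ mL + rank O_L ≤ mL + n`; hence the generalized persistency of
excitation condition `rank H_L(w_d) = mL + n` is the maximal possible rank. -/
theorem hankel_rank_bound
    {n m p L T : ℕ}
    (hn : 0 < n) (hm : 0 < m) (hp : 0 < p) (hL : 0 < L) (hT : 0 < T)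
    (hLT : L ≤ T)
    (A : Matrix (Fin n) (Fin n) ℝ) (B : Matrix (Fin n) (Fin m) ℝ)
    (C : Matrix (Fin p) (Fin n) ℝ) (D : Matrix (Fin p) (Fin m) ℝ)
    (wd : Fin T × (Fin m ⊕ Fin p) → ℝ)
    (hwd : IsTraj A B C D T wd) :
    (hankel L T hLT wd).rank ≤ m * L + (obsMat C A L).rank ∧
    m * L + (obsMat C A L).rank ≤ m * L + n :=
  hankel_rank_bound_general hLT A B C D wd hwd
end
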